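/- If (a,b) ∈ P₃, then H_Π(a,b) = (a⁴, γ_{a,b}/a) belongs to P = {(a,b) ∈ (1,2] × [1,2] : ab ≤ 2}, where γ_{a,b} = (ab + b − 2)/(a + 1 − ab). -/

import Mathlib

/-!
Cleared of denominators, the two extra constraints of `P₃` are linear in `b`:
`b (1 + a + a³) ≥ 2 + a² + a³` and `b a (2 + a² + a³) ≤ 2 (1 + a + a³)`.
The upper one is literally `a³ γ ≤ 2 (a + 1 - a b)`, i.e. `a⁴ · γ/a ≤ 2`.
Both can hold only if `a (2 + a² + a³)² ≤ 2 (1 + a + a³)²`, and the difference of the two sides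
is `(a² + 1)(a⁵ - 2)`, so `a⁴ < a⁵ ≤ 2`. Finally `1 ≤ γ/a ≤ 2` amounts to
`(a² + a + 2)/(a² + a + 1) ≤ b ≤ 2(a² + a + 1)/(2a² + a + 1)`, and these bounds are weaker than
those of `P₃` by `a(a - 1)(a² + 1) ≥ 0` and `(a² + 1)(a⁴ - 1) ≥ 0` after cross-multiplying.
-/

/-- The parameter region P₃. -/
def P3 : Set (ℝ × ℝ) :=
  {p | 1 < p.1 ∧ p.1 ≤ 2 ∧ 1 ≤ p.2 ∧ p.2 ≤ 2 ∧ p.1 * p.2 ≤ 2 ∧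
    (2 + p.1 ^ 2 + p.1 ^ 3) / (1 + p.1 + p.1 ^ 3) ≤ p.2 ∧
    p.2 ≤ 2 * (1 + p.1 + p.1 ^ 3) / (p.1 * (2 + p.1 ^ 2 + p.1 ^ 3))}

/-- The parameter region P. -/
def Pset : Set (ℝ × ℝ) :=
  {p | 1 < p.1 ∧ p.1 ≤ 2 ∧ 1 ≤ p.2 ∧ p.2 ≤ 2 ∧ p.1 * p.2 ≤ 2}

/-- The renormalization operator H_Π. -/
noncomputable def HPi (p : ℝ × ℝ) : ℝ × ℝ :=
  (p.1 ^ 4, (p.1 * p.2 + p.2 - 2) / (p.1 + 1 - p.1 * p.2) / p.1)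

section Bounds

variable {a b : ℝ}

lemma pow_five_le_two_of_P3_bounds (ha : 0 < a)
    (hlow : 2 + a ^ 2 + a ^ 3 ≤ b * (1 + a + a ^ 3))
    (hup : b * (a * (2 + a ^ 2 + a ^ 3)) ≤ 2 * (1 + a + a ^ 3)) :
    a ^ 5 ≤ 2 := by
  have hy : 0 < 1 + a + a ^ 3 := by positivity
  have hcompat : a * (2 + a ^ 2 + a ^ 3) ^ 2 ≤ 2 * (1 + a + a ^ 3) ^ 2 :=
    calc a * (2 + a ^ 2 + a ^ 3) ^ 2
        ≤ a * (2 + a ^ 2 + a ^ 3) * (b * (1 + a + a ^ 3)) := by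
          rw [sq, ← mul_assoc]; exact mul_le_mul_of_nonneg_left hlow (by positivity)
      _ = b * (a * (2 + a ^ 2 + a ^ 3)) * (1 + a + a ^ 3) := by ring
      _ ≤ 2 * (1 + a + a ^ 3) * (1 + a + a ^ 3) := mul_le_mul_of_nonneg_right hup hy.le
      _ = 2 * (1 + a + a ^ 3) ^ 2 := by ring
  have hfactor : a * (2 + a ^ 2 + a ^ 3) ^ 2 - 2 * (1 + a + a ^ 3) ^ 2
      = (a ^ 2 + 1) * (a ^ 5 - 2) := by ring
  nlinarith [sq_nonneg a]

lemma mul_sub_le_of_P3_lower_bound (ha : 1 ≤ a)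
    (hlow : 2 + a ^ 2 + a ^ 3 ≤ b * (1 + a + a ^ 3)) :
    a * (a + 1 - a * b) ≤ a * b + b - 2 := by
  have hy : 0 < 1 + a + a ^ 3 := by positivity
  have hgap : 0 ≤ a * (a - 1) * (a ^ 2 + 1) := by
    have : 0 ≤ a - 1 := by linarith
    positivity
  have key : (a ^ 2 + a + 2) * (1 + a + a ^ 3) ≤ b * (a ^ 2 + a + 1) * (1 + a + a ^ 3) := by
    nlinarith [mul_le_mul_of_nonneg_left hlow (by positivity : (0 : ℝ) ≤ a ^ 2 + a + 1)]
  nlinarith [le_of_mul_le_mul_right key hy]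

lemma le_two_mul_mul_sub_of_P3_upper_bound (ha : 1 ≤ a)
    (hup : b * (a * (2 + a ^ 2 + a ^ 3)) ≤ 2 * (1 + a + a ^ 3)) :
    a * b + b - 2 ≤ 2 * (a * (a + 1 - a * b)) := by
  have hx : 0 < a * (2 + a ^ 2 + a ^ 3) := by positivity
  have hgap : 0 ≤ (a ^ 2 + 1) * (a ^ 4 - 1) := by
    have : 1 ≤ a ^ 4 := one_le_pow₀ ha
    have : 0 ≤ a ^ 4 - 1 := by linarith
    positivity
  have key : b * (2 * a ^ 2 + a + 1) * (a * (2 + a ^ 2 + a ^ 3))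
      ≤ 2 * (a ^ 2 + a + 1) * (a * (2 + a ^ 2 + a ^ 3)) := by
    nlinarith [mul_le_mul_of_nonneg_right hup (by positivity : (0 : ℝ) ≤ 2 * a ^ 2 + a + 1)]
  nlinarith [le_of_mul_le_mul_right key hx]

end Bounds

theorem HPi_maps_P3_into_P : ∀ p ∈ P3, HPi p ∈ Pset := by
  rintro ⟨a, b⟩ ⟨ha1, -, -, -, hab, hlow, hup⟩
  have ha : 0 < a := by linarith
  replace hlow : 2 + a ^ 2 + a ^ 3 ≤ b * (1 + a + a ^ 3) := (div_le_iff₀ (by positivity)).1 hlow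
  replace hup : b * (a * (2 + a ^ 2 + a ^ 3)) ≤ 2 * (1 + a + a ^ 3) :=
    (le_div_iff₀ (by positivity)).1 hup
  have hden : 0 < (a + 1 - a * b) * a := mul_pos (by linarith) ha
  have h5 := pow_five_le_two_of_P3_bounds ha hlow hup
  simp only [HPi, Pset, Set.mem_ofPred_eq, div_div]
  refine ⟨one_lt_pow₀ ha1 (by norm_num), ?_, ?_, ?_, ?_⟩
  · linarith [pow_le_pow_right₀ ha1.le (by norm_num : 4 ≤ 5)]
  · rw [le_div_iff₀ hden]
    linarith [mul_sub_le_of_P3_lower_bound ha1.le hlow]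
  · rw [div_le_iff₀ hden]
    linarith [le_two_mul_mul_sub_of_P3_upper_bound ha1.le hup]
  · rw [mul_div_assoc', div_le_iff₀ hden]
    -- `2 (a + 1 - a b) a - a⁴ (a b + b - 2)` is `a` times the slack of `hup`
    linarith [mul_le_mul_of_nonneg_left hup ha.le]
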